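/- arXiv:2401.08144 — 3 statements merged into one kernel-verified Lean document; each statement's English description precedes it below -/
import Mathlib

section
/- Let s : E × F → ℝ be twice continuously differentiable and, for each fixed x ∈ F, μ-strongly convex in its first argument with μ > 0. Let y* : F → E be a differentiable map satisfying the first-order optimality condition ∇_y s(y*(x), x) = 0 for every x ∈ F. Then for every x ∈ F the Hessian ∇²_{yy} s(y*(x), x) (as a self-adjoint linear map on E) is invertible, the derivative of y* satisfies ∇²_{yy} s(y*(x), x) ∘ D y*(x) + ∂_x(∇_y s)(y*(x), x) = 0, and hence D y*(x) = −(∇²_{yy} s(y*(x), x))⁻¹ ∘ ∂_x(∇_y s)(y*(x), x). -/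
/-!
Along a line `t ↦ y + t • v`, strong convexity makes the derivative
`t ↦ ⟪∇_y s(y + t • v, x) - μ • (y + t • v), v⟫` of the convex function
`t ↦ s(y + t • v, x) - μ / 2 * ‖y + t • v‖²` monotone; differentiating it at `t = 0` gives
`μ * ‖v‖² ≤ ⟪H v, v⟫` for the Hessian `H`, so `H` is invertible by Lax–Milgram. Differentiating
the identity `∇_y s(y*(x'), x') = 0` in `x'` by the chain rule gives `H ∘ D y* + ∂ₓ∇_y s = 0`.
-/

open RealInnerProductSpace ContinuousLinearMap Set

section StrongConvexity

variable {E : Type*} [NormedAddCommGroup E] [InnerProductSpace ℝ E]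

theorem hasDerivAt_add_smul (y v : E) (t : ℝ) : HasDerivAt (fun t : ℝ => y + t • v) v t := by
  simpa using ((hasDerivAt_id t).smul_const v).const_add y

variable [CompleteSpace E]

theorem monotone_inner_gradient_sub_smul_of_convexOn {f : E → ℝ} {μ : ℝ}
    (hf : Differentiable ℝ f) (hconv : ConvexOn ℝ univ fun y => f y - μ / 2 * ‖y‖ ^ 2) (y v : E) :
    Monotone fun t : ℝ => ⟪gradient f (y + t • v) - μ • (y + t • v), v⟫ := by
  set φ : ℝ → ℝ := fun t => f (y + t • v) - μ / 2 * ‖y + t • v‖ ^ 2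
  have hφ : ConvexOn ℝ univ φ := by
    have hφ_eq : φ = (fun y => f y - μ / 2 * ‖y‖ ^ 2) ∘ AffineMap.lineMap y (y + v) := by
      ext t
      simp [AffineMap.lineMap_apply, add_comm, φ]
    simpa only [hφ_eq, preimage_univ] using hconv.comp_affineMap (AffineMap.lineMap y (y + v))
  have hφ' : ∀ t, HasDerivAt φ (⟪gradient f (y + t • v) - μ • (y + t • v), v⟫) t := by
    intro t
    have hline := hasDerivAt_add_smul y v t
    have hfd := (hf (y + t • v)).hasGradientAt.hasFDerivAt.comp_hasDerivAt t hline
    refine (hfd.sub (hline.norm_sq.const_mul (μ / 2))).congr_deriv ?_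
    simp only [InnerProductSpace.toDual_apply_apply, inner_sub_left, real_inner_smul_left]
    ring
  have hmono := hφ.monotoneOn_deriv fun t _ => (hφ' t).differentiableAt
  intro a b hab
  simpa only [(hφ' _).deriv] using hmono (mem_univ a) (mem_univ b) hab

theorem mul_norm_sq_le_inner_of_convexOn {f : E → ℝ} {μ : ℝ} (hf : Differentiable ℝ f)
    (hconv : ConvexOn ℝ univ fun y => f y - μ / 2 * ‖y‖ ^ 2) {H : E →L[ℝ] E} {y : E}
    (hH : HasFDerivAt (gradient f) H y) (v : E) : μ * ‖v‖ ^ 2 ≤ ⟪H v, v⟫ := by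
  have hline : HasDerivAt (fun t : ℝ => gradient f (y + t • v) - μ • (y + t • v))
      (H v - μ • v) 0 := by
    have hH' : HasFDerivAt (gradient f) H (y + (0 : ℝ) • v) := by simpa using hH
    exact (hH'.comp_hasDerivAt 0 (hasDerivAt_add_smul y v 0)).sub
      ((hasDerivAt_add_smul y v 0).const_smul μ)
  have h := (hline.inner ℝ (hasDerivAt_const 0 v)).nonneg_of_monotone
    (monotone_inner_gradient_sub_smul_of_convexOn hf hconv y v)
  simp only [inner_zero_right, zero_add, inner_sub_left, real_inner_smul_left,
    real_inner_self_eq_norm_sq] at h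
  linarith

theorem exists_continuousLinearEquiv_of_coercive {H : E →L[ℝ] E} {μ : ℝ}
    (hμ : 0 < μ) (hH : ∀ v, μ * ‖v‖ ^ 2 ≤ ⟪H v, v⟫) : ∃ e : E ≃L[ℝ] E, (e : E →L[ℝ] E) = H := by
  have hB : IsCoercive ((innerSL ℝ).comp H) :=
    ⟨μ, hμ, fun v => by simpa [mul_assoc, sq] using hH v⟩
  refine ⟨hB.continuousLinearEquivOfBilin, ContinuousLinearMap.ext fun v => ?_⟩
  exact ext_inner_right ℝ fun w => by simp [hB.continuousLinearEquivOfBilin_apply]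

end StrongConvexity

section PartialDerivatives

variable {E F V : Type*} [NormedAddCommGroup E] [NormedSpace ℝ E] [NormedAddCommGroup F]
  [NormedSpace ℝ F] [NormedAddCommGroup V] [NormedSpace ℝ V]

theorem fderiv_partial_left {G : E × F → V} {y : E} {x : F} (hG : DifferentiableAt ℝ G (y, x)) :
    fderiv ℝ (fun y' => G (y', x)) y = (fderiv ℝ G (y, x)).comp (inl ℝ E F) :=
  (hG.hasFDerivAt.comp y (hasFDerivAt_prodMk_left y x)).fderiv

theorem fderiv_partial_right {G : E × F → V} {y : E} {x : F} (hG : DifferentiableAt ℝ G (y, x)) :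
    fderiv ℝ (fun x' => G (y, x')) x = (fderiv ℝ G (y, x)).comp (inr ℝ E F) :=
  (hG.hasFDerivAt.comp x (hasFDerivAt_prodMk_right y x)).fderiv

theorem fderiv_partial_comp_add_fderiv_partial_eq_zero {G : E × F → V} {y : F → E} {x : F}
    (hG : DifferentiableAt ℝ G (y x, x)) (hy : DifferentiableAt ℝ y x)
    (hzero : ∀ x', G (y x', x') = 0) :
    (fderiv ℝ (fun y' => G (y', x)) (y x)).comp (fderiv ℝ y x)
      + fderiv ℝ (fun x' => G (y x, x')) x = 0 := by
  have hgraph : HasFDerivAt (fun x' => (y x', x'))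
      ((fderiv ℝ y x).prod (ContinuousLinearMap.id ℝ F)) x :=
    hy.hasFDerivAt.prodMk (hasFDerivAt_id x)
  have hchain :
      (fderiv ℝ G (y x, x)).comp ((fderiv ℝ y x).prod (ContinuousLinearMap.id ℝ F)) = 0 := by
    refine (HasFDerivAt.comp (f := fun x' => (y x', x')) x hG.hasFDerivAt hgraph).unique ?_
    simpa only [Function.comp_def, hzero] using hasFDerivAt_const (0 : V) x
  rw [fderiv_partial_left hG, fderiv_partial_right hG]
  ext v
  simpa [← map_add] using congr($hchain v)

end PartialDerivatives

theorem contDiff_gradient_partial {E F : Type*} [NormedAddCommGroup E] [InnerProductSpace ℝ E]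
    [CompleteSpace E] [NormedAddCommGroup F] [NormedSpace ℝ F] {s : E × F → ℝ}
    (hs : ContDiff ℝ 2 s) : ContDiff ℝ 1 fun q : E × F => gradient (fun y => s (y, q.2)) q.1 := by
  have hsd : Differentiable ℝ s := hs.differentiable (by norm_num)
  have hgrad : (fun q : E × F => gradient (fun y => s (y, q.2)) q.1) = fun q =>
      (InnerProductSpace.toDual ℝ E).symm
        ((compL ℝ E (E × F) ℝ).flip (inl ℝ E F) (fderiv ℝ s q)) := by
    ext1 q
    rw [gradient, fderiv_partial_left (hsd q)]
    rfl
  rw [hgrad]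
  exact ((InnerProductSpace.toDual ℝ E).symm.toContinuousLinearEquiv.contDiff.comp
    ((compL ℝ E (E × F) ℝ).flip (inl ℝ E F)).contDiff).comp (hs.fderiv_right (by norm_num))

theorem ContinuousLinearEquiv.eq_neg_symm_comp_of_comp_add_eq_zero {E F V : Type*}
    [NormedAddCommGroup E] [NormedSpace ℝ E] [NormedAddCommGroup F] [NormedSpace ℝ F]
    [NormedAddCommGroup V] [NormedSpace ℝ V] (e : E ≃L[ℝ] V) {A : F →L[ℝ] E} {B : F →L[ℝ] V}
    (h : (e : E →L[ℝ] V).comp A + B = 0) : A = -((e.symm : V →L[ℝ] E).comp B) := by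
  rw [eq_neg_of_add_eq_zero_right h]
  ext v
  simp

theorem stmt0_general
    {E F : Type*} [NormedAddCommGroup E] [InnerProductSpace ℝ E] [FiniteDimensional ℝ E]
    [NormedAddCommGroup F] [InnerProductSpace ℝ F]
    (s : E × F → ℝ) (μ : ℝ) (hμ : 0 < μ)
    (hs : ContDiff ℝ 2 s)
    (hconv : ∀ x : F, ConvexOn ℝ Set.univ (fun y : E => s (y, x) - μ / 2 * ‖y‖ ^ 2))
    (ystar : F → E) (hy : Differentiable ℝ ystar)
    (hopt : ∀ x : F, gradient (fun y => s (y, x)) (ystar x) = 0) (x : F) :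
    ∃ Hinv : E →L[ℝ] E,
      (fderiv ℝ (fun y => gradient (fun y' => s (y', x)) y) (ystar x)).comp Hinv
          = ContinuousLinearMap.id ℝ E ∧
      Hinv.comp (fderiv ℝ (fun y => gradient (fun y' => s (y', x)) y) (ystar x))
          = ContinuousLinearMap.id ℝ E ∧
      (fderiv ℝ (fun y => gradient (fun y' => s (y', x)) y) (ystar x)).comp (fderiv ℝ ystar x)
          + fderiv ℝ (fun x' => gradient (fun y' => s (y', x')) (ystar x)) x = 0 ∧
      fderiv ℝ ystar x
          = -(Hinv.comp (fderiv ℝ (fun x' => gradient (fun y' => s (y', x')) (ystar x)) x)) := by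
  set G : E × F → E := fun q => gradient (fun y => s (y, q.2)) q.1
  have hG : Differentiable ℝ G := (contDiff_gradient_partial hs).differentiable one_ne_zero
  have hHess : HasFDerivAt (gradient fun y => s (y, x))
      (fderiv ℝ (fun y => G (y, x)) (ystar x)) (ystar x) :=
    (hG.comp (differentiable_id.prodMk (differentiable_const x)) _).hasFDerivAt
  have hsx : Differentiable ℝ fun y => s (y, x) :=
    (hs.differentiable (by norm_num)).comp (differentiable_id.prodMk (differentiable_const x))
  obtain ⟨e, he⟩ := exists_continuousLinearEquiv_of_coercive hμ
    (mul_norm_sq_le_inner_of_convexOn hsx (hconv x) hHess)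
  have himplicit := fderiv_partial_comp_add_fderiv_partial_eq_zero (G := G) (hG _) (hy x) hopt
  refine ⟨e.symm, ?_, ?_, himplicit, ?_⟩
  · rw [← he, e.coe_comp_coe_symm]
  · rw [← he, e.coe_symm_comp_coe]
  · rw [← he] at himplicit
    exact e.eq_neg_symm_comp_of_comp_add_eq_zero himplicit

/-- Implicit differentiation of the follower's best response (Lemma 1):
the Hessian of `s` in its first argument at `(y*(x), x)` is invertible,
`D y*(x)` satisfies the implicit equation, and hence equals
`-(Hessian)⁻¹ ∘ ∂ₓ(∇_y s)`. -/
theorem stmt0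
    {E F : Type*} [NormedAddCommGroup E] [InnerProductSpace ℝ E] [FiniteDimensional ℝ E]
    [NormedAddCommGroup F] [InnerProductSpace ℝ F] [FiniteDimensional ℝ F]
    (s : E × F → ℝ) (μ : ℝ) (hμ : 0 < μ)
    (hs : ContDiff ℝ 2 s)
    (hconv : ∀ x : F, ConvexOn ℝ Set.univ (fun y : E => s (y, x) - μ / 2 * ‖y‖ ^ 2))
    (ystar : F → E) (hy : Differentiable ℝ ystar)
    (hopt : ∀ x : F, gradient (fun y => s (y, x)) (ystar x) = 0) (x : F) :
    ∃ Hinv : E →L[ℝ] E,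
      (fderiv ℝ (fun y => gradient (fun y' => s (y', x)) y) (ystar x)).comp Hinv
          = ContinuousLinearMap.id ℝ E ∧
      Hinv.comp (fderiv ℝ (fun y => gradient (fun y' => s (y', x)) y) (ystar x))
          = ContinuousLinearMap.id ℝ E ∧
      (fderiv ℝ (fun y => gradient (fun y' => s (y', x)) y) (ystar x)).comp (fderiv ℝ ystar x)
          + fderiv ℝ (fun x' => gradient (fun y' => s (y', x')) (ystar x)) x = 0 ∧
      fderiv ℝ ystar x
          = -(Hinv.comp (fderiv ℝ (fun x' => gradient (fun y' => s (y', x')) (ystar x)) x)) :=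
  stmt0_general s μ hμ hs hconv ystar hy hopt x
end

section
/- Let s : E × F → ℝ be continuously differentiable such that for each fixed x ∈ F the function y ↦ s(y, x) is μ-strongly convex (μ > 0), and suppose the gradient is ℓ-Lipschitz in the second argument uniformly in the first: ‖∇_y s(y, x) − ∇_y s(y, x̄)‖ ≤ ℓ‖x − x̄‖ for all y ∈ E and x, x̄ ∈ F. Let y*(x) denote the unique minimizer over E of y ↦ s(y, x). Then the best-response map y* is (ℓ/μ)-Lipschitz: ‖y*(x) − y*(x̄)‖ ≤ (ℓ/μ)‖x − x̄‖ for all x, x̄ ∈ F. -/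
/-!
Fix `x` and write `a = y*(x)`, `b = y*(x̄)`. Strong convexity of `s(·, x)` makes its gradient
strongly monotone, and since `∇_y s(a, x) = 0` this gives
`μ ‖b - a‖² ≤ ⟪∇_y s(b, x), b - a⟫ ≤ ‖∇_y s(b, x)‖ ‖b - a‖`.
As `∇_y s(b, x̄) = 0` as well, `‖∇_y s(b, x)‖ = ‖∇_y s(b, x) - ∇_y s(b, x̄)‖ ≤ ℓ ‖x - x̄‖`.
-/

open Set InnerProductSpace
open scoped RealInnerProductSpace

theorem ConvexOn.hasFDerivAt_apply_sub_le {E : Type*} [NormedAddCommGroup E] [NormedSpace ℝ E]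
    {s : Set E} {g : E → ℝ} {g' : E →L[ℝ] ℝ} {a b : E} (hg : ConvexOn ℝ s g) (ha : a ∈ s)
    (hb : b ∈ s) (hg' : HasFDerivAt g g' a) :
    g' (b - a) ≤ g b - g a := by
  set L : ℝ →ᵃ[ℝ] E := AffineMap.lineMap a b
  have hline : ConvexOn ℝ (L ⁻¹' s) (g ∘ L) := hg.comp_affineMap L
  have hderiv : HasDerivAt (g ∘ L) (g' (b - a)) 0 := by
    have hg'L : HasFDerivAt g g' (L 0) := by simpa [L] using hg'
    exact hg'L.comp_hasDerivAt (0 : ℝ) AffineMap.hasDerivAt_lineMap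
  have hslope := hline.le_slope_of_hasDerivAt (by simpa [L] using ha) (by simpa [L] using hb)
    one_pos hderiv
  simpa [slope, L] using hslope

section StrongConvexity

variable {E : Type*} [NormedAddCommGroup E] [InnerProductSpace ℝ E] [CompleteSpace E]
  {s : Set E} {f : E → ℝ} {m : ℝ} {a b fa fb : E}

theorem StrongConvexOn.add_inner_add_le (hf : StrongConvexOn s m f) (ha : a ∈ s) (hb : b ∈ s)
    (hfa : HasGradientAt f fa a) :
    f a + ⟪fa, b - a⟫_ℝ + m / 2 * ‖b - a‖ ^ 2 ≤ f b := by
  have hsq : HasFDerivAt (fun y : E => m / 2 * ‖y‖ ^ 2) ((m / 2) • (2 • innerSL ℝ a)) a :=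
    (hasStrictFDerivAt_norm_sq a).hasFDerivAt.const_mul (m / 2)
  have h := (strongConvexOn_iff_convex.1 hf).hasFDerivAt_apply_sub_le ha hb
    ((hasGradientAt_iff_hasFDerivAt.1 hfa).sub hsq)
  have hexpand : ‖b‖ ^ 2 = ‖a‖ ^ 2 + 2 * ⟪a, b - a⟫_ℝ + ‖b - a‖ ^ 2 := by
    simpa using norm_add_sq_real a (b - a)
  simp only [sub_apply, toDual_apply_apply, smul_apply, innerSL_apply_apply, smul_eq_mul,
    nsmul_eq_mul, Nat.cast_ofNat] at h
  rw [hexpand] at h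
  linarith

theorem StrongConvexOn.mul_norm_sub_sq_le_inner (hf : StrongConvexOn s m f) (ha : a ∈ s)
    (hb : b ∈ s) (hfa : HasGradientAt f fa a) (hfb : HasGradientAt f fb b) :
    m * ‖b - a‖ ^ 2 ≤ ⟪fb - fa, b - a⟫_ℝ := by
  have hab := hf.add_inner_add_le ha hb hfa
  have hba := hf.add_inner_add_le hb ha hfb
  have hflip : ⟪fb, a - b⟫_ℝ = -⟪fb, b - a⟫_ℝ := by rw [← neg_sub, inner_neg_right]
  rw [norm_sub_rev, hflip] at hba
  rw [inner_sub_left]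
  linarith

theorem StrongConvexOn.mul_norm_sub_le_norm (hf : StrongConvexOn s m f) (ha : a ∈ s) (hb : b ∈ s)
    (hfa : HasGradientAt f 0 a) (hfb : HasGradientAt f fb b) :
    m * ‖b - a‖ ≤ ‖fb‖ := by
  rcases eq_or_ne b a with rfl | hne
  · simp
  have hpos : 0 < ‖b - a‖ := norm_pos_iff.2 (sub_ne_zero.2 hne)
  refine le_of_mul_le_mul_right ?_ hpos
  calc m * ‖b - a‖ * ‖b - a‖ = m * ‖b - a‖ ^ 2 := by ring
    _ ≤ ⟪fb - 0, b - a⟫_ℝ := hf.mul_norm_sub_sq_le_inner ha hb hfa hfb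
    _ ≤ ‖fb‖ * ‖b - a‖ := by simpa using real_inner_le_norm fb (b - a)

end StrongConvexity

theorem IsLocalMin.hasGradientAt_zero {E : Type*} [NormedAddCommGroup E] [InnerProductSpace ℝ E]
    [CompleteSpace E] {f : E → ℝ} {a : E} (hmin : IsLocalMin f a) (hf : DifferentiableAt ℝ f a) :
    HasGradientAt f 0 a := by
  simpa [gradient, hmin.fderiv_eq_zero] using hf.hasGradientAt

theorem stmt1_general
    {E F : Type*} [NormedAddCommGroup E] [InnerProductSpace ℝ E] [FiniteDimensional ℝ E]
    [NormedAddCommGroup F] [InnerProductSpace ℝ F]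
    (s : E × F → ℝ) (μ ℓ : ℝ) (hμ : 0 < μ)
    (hs : ContDiff ℝ 1 s)
    (hconv : ∀ x : F, ConvexOn ℝ Set.univ (fun y : E => s (y, x) - μ / 2 * ‖y‖ ^ 2))
    (hlip : ∀ (y : E) (x xb : F),
      ‖gradient (fun y' => s (y', x)) y - gradient (fun y' => s (y', xb)) y‖ ≤ ℓ * ‖x - xb‖)
    (ystar : F → E)
    (hmin : ∀ (x : F) (y : E), s (ystar x, x) ≤ s (y, x)) :
    ∀ x xb : F, ‖ystar x - ystar xb‖ ≤ ℓ / μ * ‖x - xb‖ := by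
  have hdiff : ∀ x : F, Differentiable ℝ (fun y : E => s (y, x)) := fun x =>
    (hs.differentiable one_ne_zero).comp (differentiable_id.prodMk (differentiable_const x))
  have hcrit : ∀ x : F, HasGradientAt (fun y : E => s (y, x)) 0 (ystar x) := fun x =>
    IsLocalMin.hasGradientAt_zero (Filter.Eventually.of_forall (hmin x)) (hdiff x _)
  intro x xb
  have hstrong := (strongConvexOn_iff_convex (f := fun y : E => s (y, x))).2 (hconv x)
  have hgrowth := hstrong.mul_norm_sub_le_norm (mem_univ _) (mem_univ _) (hcrit x)
    (hdiff x (ystar xb)).hasGradientAt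
  have hbound := hlip (ystar xb) x xb
  rw [(hcrit xb).gradient, sub_zero] at hbound
  rw [norm_sub_rev, div_mul_eq_mul_div, le_div_iff₀ hμ]
  linarith

/-- Lipschitz continuity of the followers' best-response map: if `s(·, x)` is
`μ`-strongly convex and `∇_y s` is `ℓ`-Lipschitz in the second argument uniformly
in the first, then the best-response map `y*` is `(ℓ/μ)`-Lipschitz. -/
theorem stmt1
    {E F : Type*} [NormedAddCommGroup E] [InnerProductSpace ℝ E] [FiniteDimensional ℝ E]
    [NormedAddCommGroup F] [InnerProductSpace ℝ F] [FiniteDimensional ℝ F]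
    (s : E × F → ℝ) (μ ℓ : ℝ) (hμ : 0 < μ)
    (hs : ContDiff ℝ 1 s)
    (hconv : ∀ x : F, ConvexOn ℝ Set.univ (fun y : E => s (y, x) - μ / 2 * ‖y‖ ^ 2))
    (hlip : ∀ (y : E) (x xb : F),
      ‖gradient (fun y' => s (y', x)) y - gradient (fun y' => s (y', xb)) y‖ ≤ ℓ * ‖x - xb‖)
    (ystar : F → E)
    (hmin : ∀ (x : F) (y : E), s (ystar x, x) ≤ s (y, x)) :
    ∀ x xb : F, ‖ystar x - ystar xb‖ ≤ ℓ / μ * ‖x - xb‖ :=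
  stmt1_general s μ ℓ hμ hs hconv hlip ystar hmin
end

section
/- Let H be an n×n real symmetric matrix and μ > 0, γ > 0 be such that H − μI is positive semidefinite and I − γH is positive semidefinite (so all eigenvalues of H lie in [μ, 1/γ]; in particular H is invertible and γμ ≤ 1). Let J be an m×n real matrix and define the iteration Z_d = Z_{d−1} − γ(Z_{d−1} H − J) for d = 1, …, D from an arbitrary m×n real matrix Z_0. Then ‖Z_D − J H⁻¹‖_F ≤ (√n (1 − γμ))^D ‖Z_0 − J H⁻¹‖_F. -/
open scoped BigOperators

/-- The Frobenius norm of a real matrix. -/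
noncomputable def frobNorm {m n : ℕ} (A : Matrix (Fin m) (Fin n) ℝ) : ℝ :=
  Real.sqrt (∑ i, ∑ j, (A i j) ^ 2)

/-! The error `E_d = Z_d - J H⁻¹` satisfies `E_{d+1} = E_d (1 - γH)`, and `0 ≤ 1 - γH ≤ (1 - γμ) • 1`
in the Loewner order. Hence `(1 - γH)² ≤ (1 - γμ)² • 1`, whose trace bounds the squared Frobenius
norm of `1 - γH` by `n (1 - γμ)²`; submultiplicativity of the Frobenius norm finishes the proof. -/

open Matrix
open scoped Matrix.Norms.Frobenius MatrixOrder

lemma frobNorm_eq_norm {m n : ℕ} (A : Matrix (Fin m) (Fin n) ℝ) : frobNorm A = ‖A‖ := by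
  simp only [frobNorm, frobenius_norm_def, Real.norm_eq_abs, Real.rpow_two, sq_abs,
    Real.sqrt_eq_rpow]

namespace Matrix

variable {m n : Type*} [Fintype m] [Fintype n]

lemma frobenius_norm_sq_eq_trace_mul_transpose (A : Matrix m n ℝ) :
    ‖A‖ ^ 2 = (A * Aᵀ).trace := by
  rw [frobenius_norm_def, ← Real.sqrt_eq_rpow, Real.sq_sqrt (by positivity)]
  simp [trace, mul_apply, sq]

lemma trace_mono {A B : Matrix n n ℝ} (h : A ≤ B) : A.trace ≤ B.trace :=
  sub_nonneg.mp (trace_sub B A ▸ (le_iff.mp h).trace_nonneg)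

lemma frobenius_norm_le_norm_pow_mul (E : ℕ → Matrix m n ℝ) (M : Matrix n n ℝ)
    (hE : ∀ d, E (d + 1) = E d * M) (D : ℕ) : ‖E D‖ ≤ ‖M‖ ^ D * ‖E 0‖ := by
  induction D with
  | zero => simp
  | succ d ih => calc
      ‖E (d + 1)‖ ≤ ‖E d‖ * ‖M‖ := hE d ▸ frobenius_norm_mul _ _
      _ ≤ ‖M‖ ^ d * ‖E 0‖ * ‖M‖ := by gcongr
      _ = ‖M‖ ^ (d + 1) * ‖E 0‖ := by ring

variable [DecidableEq n]

omit [Fintype n] in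
lemma nonneg_of_nonneg_of_le_smul_one [Nonempty n] {M : Matrix n n ℝ} {c : ℝ} (h₀ : 0 ≤ M)
    (hc : M ≤ c • 1) : 0 ≤ c := by
  obtain ⟨i⟩ := ‹Nonempty n›
  simpa using (h₀.trans hc).posSemidef.diag_nonneg (i := i)

-- Conjugate `c • 1 - M ≥ 0` by `√M`.
lemma mul_self_le_smul_self {M : Matrix n n ℝ} {c : ℝ} (h₀ : 0 ≤ M) (hc : M ≤ c • 1) :
    M * M ≤ c • M := by
  set S := CFC.sqrt M
  have hS : S * S = M := CFC.sqrt_mul_sqrt_self M h₀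
  have : S * (c • 1 - M) * S = c • M - M * M := by
    rw [← hS]; noncomm_ring
  rw [← sub_nonneg, ← this]
  exact conjugate_nonneg_of_nonneg (sub_nonneg.mpr hc) (CFC.sqrt_nonneg M)

lemma frobenius_norm_le_sqrt_card_mul {M : Matrix n n ℝ} {c : ℝ} (h₀ : 0 ≤ M)
    (hc : M ≤ c • 1) : ‖M‖ ≤ √(Fintype.card n) * c := by
  cases isEmpty_or_nonempty n
  · simp [Subsingleton.elim M 0]
  have hc₀ := nonneg_of_nonneg_of_le_smul_one h₀ hc
  have hsq : M * M ≤ c ^ 2 • 1 := calc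
    M * M ≤ c • M := mul_self_le_smul_self h₀ hc
    _ ≤ c • c • 1 := smul_le_smul_of_nonneg_left hc hc₀
    _ = c ^ 2 • 1 := by rw [smul_smul, sq]
  have hMt : Mᵀ = M := h₀.posSemidef.isHermitian
  refine (pow_le_pow_iff_left₀ (norm_nonneg M) (by positivity) two_ne_zero).mp ?_
  rw [frobenius_norm_sq_eq_trace_mul_transpose, hMt, mul_pow, Real.sq_sqrt (by positivity)]
  simpa [mul_comm] using trace_mono hsq

omit [Fintype m] in
lemma gradient_step_sub_mul_inv {H : Matrix n n ℝ} (hH : IsUnit H) (γ : ℝ)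
    (J Z : Matrix m n ℝ) :
    Z - γ • (Z * H - J) - J * H⁻¹ = (Z - J * H⁻¹) * (1 - γ • H) := by
  have hJ : J * H⁻¹ * H = J := by
    rw [Matrix.mul_assoc, nonsing_inv_mul H ((isUnit_iff_isUnit_det H).mp hH), Matrix.mul_one]
  rw [Matrix.mul_sub, Matrix.mul_one, Matrix.mul_smul, Matrix.sub_mul, hJ]
  module

end Matrix

theorem stmt4_general
    {m n : ℕ} (H : Matrix (Fin n) (Fin n) ℝ) (μ γ : ℝ) (hμ : 0 < μ) (hγ : 0 < γ)
    (hlow : (H - μ • (1 : Matrix (Fin n) (Fin n) ℝ)).PosSemidef)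
    (hupp : ((1 : Matrix (Fin n) (Fin n) ℝ) - γ • H).PosSemidef)
    (J : Matrix (Fin m) (Fin n) ℝ)
    (Z : ℕ → Matrix (Fin m) (Fin n) ℝ)
    (hrec : ∀ d : ℕ, Z (d + 1) = Z d - γ • (Z d * H - J))
    (D : ℕ) :
    frobNorm (Z D - J * H⁻¹) ≤
      (Real.sqrt (n : ℝ) * (1 - γ * μ)) ^ D * frobNorm (Z 0 - J * H⁻¹) := by
  have hH : IsUnit H := by
    simpa using ((PosDef.one.smul hμ).add_posSemidef hlow).isUnit
  have hM : 1 - γ • H ≤ (1 - γ * μ) • 1 := by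
    have : (1 - γ * μ) • 1 - (1 - γ • H) = γ • (H - μ • 1) := by module
    rw [le_iff, this]
    exact hlow.smul hγ.le
  have hnorm := frobenius_norm_le_sqrt_card_mul hupp.nonneg hM
  rw [Fintype.card_fin] at hnorm
  rw [frobNorm_eq_norm, frobNorm_eq_norm]
  calc ‖Z D - J * H⁻¹‖ ≤ ‖1 - γ • H‖ ^ D * ‖Z 0 - J * H⁻¹‖ :=
        frobenius_norm_le_norm_pow_mul (fun d ↦ Z d - J * H⁻¹) _
          (fun d ↦ by rw [hrec d, gradient_step_sub_mul_inv hH]) D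
    _ ≤ _ := by gcongr

/-- Local Jacobian–Hessian-inverse approximation (Lemma 6): if all eigenvalues of the
symmetric matrix `H` lie in `[μ, 1/γ]`, the iteration `Z_d = Z_{d−1} − γ(Z_{d−1}H − J)`
satisfies `‖Z_D − JH⁻¹‖_F ≤ (√n (1 − γμ))^D ‖Z_0 − JH⁻¹‖_F`. -/
theorem stmt4
    {m n : ℕ} (H : Matrix (Fin n) (Fin n) ℝ) (μ γ : ℝ) (hμ : 0 < μ) (hγ : 0 < γ)
    (hsymm : H.IsSymm)
    (hlow : (H - μ • (1 : Matrix (Fin n) (Fin n) ℝ)).PosSemidef)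
    (hupp : ((1 : Matrix (Fin n) (Fin n) ℝ) - γ • H).PosSemidef)
    (J : Matrix (Fin m) (Fin n) ℝ)
    (Z : ℕ → Matrix (Fin m) (Fin n) ℝ)
    (hrec : ∀ d : ℕ, Z (d + 1) = Z d - γ • (Z d * H - J))
    (D : ℕ) :
    frobNorm (Z D - J * H⁻¹) ≤
      (Real.sqrt (n : ℝ) * (1 - γ * μ)) ^ D * frobNorm (Z 0 - J * H⁻¹) :=
  stmt4_general H μ γ hμ hγ hlow hupp J Z hrec D
end
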